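/- Fix an index i. The real-valued map t ↦ m(v^{(i,t)})^H Φ(v^{(i,t)})^{-1} m(v^{(i,t)}) satisfies m(v)^H Φ(v)^{-1} m(v) = σ^{-4} y^H A Φ(v) A^H y for all v, and is differentiable at t = v_i with derivative σ^{-4} y^H A Φ(v) E_i(v) Φ(v) A^H y = σ^{-4} v_i^{-2} |y^H A u_i|², where u_i is the i-th column of Φ(v). -/

import Mathlib

open Matrix MeasureTheory

/-- `Dmat v` is the diagonal matrix with diagonal entries `v 1, …, v N`. -/
noncomputable def Dmat {N : ℕ} (v : Fin N → ℝ) : Matrix (Fin N) (Fin N) ℂ :=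
  Matrix.diagonal fun i => (v i : ℂ)

/-- `Phi A σ v = (σ⁻² AᴴA + D(v)⁻¹)⁻¹`. -/
noncomputable def Phi {M N : ℕ} (A : Matrix (Fin M) (Fin N) ℂ) (σ : ℝ) (v : Fin N → ℝ) :
    Matrix (Fin N) (Fin N) ℂ :=
  (((σ : ℂ) ^ 2)⁻¹ • (Aᴴ * A) + (Dmat v)⁻¹)⁻¹

/-- `mvec A σ y v = σ⁻² Φ(v) Aᴴ y`. -/
noncomputable def mvec {M N : ℕ} (A : Matrix (Fin M) (Fin N) ℂ) (σ : ℝ) (y : Fin M → ℂ)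
    (v : Fin N → ℝ) : Fin N → ℂ :=
  ((σ : ℂ) ^ 2)⁻¹ • (Phi A σ v *ᵥ (Aᴴ *ᵥ y))

/-- Circularly symmetric complex Gaussian density
`CN(x; μ, S) = (π^N det S)⁻¹ exp(-(x-μ)ᴴ S⁻¹ (x-μ))` (real-valued, `det S` and the
quadratic form being real for Hermitian positive definite `S`). -/
noncomputable def gaussDensity {N : ℕ} (μ : Fin N → ℂ) (S : Matrix (Fin N) (Fin N) ℂ)
    (x : Fin N → ℂ) : ℝ :=
  (Real.pi ^ N * S.det.re)⁻¹ * Real.exp (-(star (x - μ) ⬝ᵥ (S⁻¹ *ᵥ (x - μ))).re)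

/-- Likelihood `p(y|x) = (π σ²)^{-M} exp(-σ⁻² ‖y - A x‖²)`. -/
noncomputable def likelihood {M N : ℕ} (A : Matrix (Fin M) (Fin N) ℂ) (σ : ℝ) (y : Fin M → ℂ)
    (x : Fin N → ℂ) : ℝ :=
  ((Real.pi * σ ^ 2) ^ M)⁻¹ * Real.exp (-(σ ^ 2)⁻¹ * ∑ j, Complex.normSq ((y - A *ᵥ x) j))

/-!
Since `Φ(v)` is Hermitian, `m(v)ᴴ Φ(v)⁻¹ m(v) = σ⁻⁴ (Aᴴy)ᴴ Φ(v) (Aᴴy)`. Replacing `vᵢ` by `t`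
changes `Φ⁻¹ = σ⁻² AᴴA + D(v)⁻¹` only by `(t⁻¹ - vᵢ⁻¹) eᵢeᵢᵀ`, whose derivative at `t = vᵢ` is
`-E_i(v)`; the derivative `X' ↦ -X⁻¹ X' X⁻¹` of inversion then gives `Φ(v) E_i(v) Φ(v)` as the
derivative of `t ↦ Φ(v^{(i,t)})`. The quadratic form of `Φ eᵢeᵢᵀ Φ` at `Aᴴy` is `|(Φ Aᴴ y)ᵢ|²`,
and `(Φ Aᴴ y)ᵢ` is the conjugate of `yᴴ A uᵢ`.
-/

theorem HasDerivAt.ringInverse {𝕜 R : Type*} [NontriviallyNormedField 𝕜] [NormedRing R]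
    [HasSummableGeomSeries R] [NormedAlgebra 𝕜 R] {f : 𝕜 → R} {f' : R} {x : 𝕜}
    (hf : HasDerivAt f f' x) (hx : IsUnit (f x)) :
    HasDerivAt (fun t => Ring.inverse (f t))
      (-(Ring.inverse (f x) * f' * Ring.inverse (f x))) x := by
  obtain ⟨u, hu⟩ := hx
  have h := hasFDerivAt_ringInverse (𝕜 := 𝕜) u
  rw [hu] at h
  exact (h.comp_hasDerivAt x hf).congr_deriv (by simp [← hu])

namespace Matrix

variable {m n α : Type*} [Fintype m] [Fintype n]

theorem star_conjTranspose_mulVec_dotProduct [CommSemiring α] [StarRing α]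
    (A : Matrix m n α) (y : m → α) (w : n → α) :
    star (Aᴴ *ᵥ y) ⬝ᵥ w = star y ⬝ᵥ (A *ᵥ w) := by
  rw [star_mulVec, conjTranspose_conjTranspose, dotProduct_mulVec]

theorem IsHermitian.star_mulVec [CommSemiring α] [StarRing α] {P : Matrix n n α}
    (hP : P.IsHermitian) (u : n → α) : star (P *ᵥ u) = star u ᵥ* P := by
  rw [Matrix.star_mulVec, hP.eq]

theorem IsHermitian.star_smul_mulVec_dotProduct_inv_mulVec [DecidableEq n] [Field α] [StarRing α]
    {P : Matrix n n α} (hP : P.IsHermitian) (hdet : IsUnit P.det) {c : α} (hc : star c = c)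
    (u : n → α) :
    star (c • (P *ᵥ u)) ⬝ᵥ (P⁻¹ *ᵥ (c • (P *ᵥ u))) = c ^ 2 * (star u ⬝ᵥ (P *ᵥ u)) := by
  rw [mulVec_smul, mulVec_mulVec, nonsing_inv_mul _ hdet, one_mulVec, star_smul, hc,
    hP.star_mulVec, smul_dotProduct, dotProduct_smul, ← dotProduct_mulVec, smul_smul,
    smul_eq_mul, sq]

theorem IsHermitian.star_dotProduct_mulVec_single [DecidableEq n] [CommSemiring α] [StarRing α]
    {P : Matrix n n α} (hP : P.IsHermitian) (u : n → α) (i : n) :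
    star u ⬝ᵥ (P *ᵥ Pi.single i 1) = star ((P *ᵥ u) i) := by
  rw [dotProduct_mulVec, ← hP.star_mulVec, dotProduct_single, mul_one, Pi.star_apply]

theorem IsHermitian.star_dotProduct_mul_single_mul_mulVec [DecidableEq n] [CommSemiring α]
    [StarRing α] {P : Matrix n n α} (hP : P.IsHermitian) (i : n) (c : α) (u : n → α) :
    star u ⬝ᵥ ((P * single i i c * P) *ᵥ u) = star ((P *ᵥ u) i) * c * (P *ᵥ u) i := by
  rw [← mulVec_mulVec, ← mulVec_mulVec, dotProduct_mulVec, ← hP.star_mulVec, single_mulVec]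
  simp [dotProduct, Function.update_apply, mul_assoc]

end Matrix

section

-- Only the topology matters for the derivatives; this norm makes square matrices a normed algebra.
attribute [local instance] Matrix.linftyOpNormedRing Matrix.linftyOpNormedAlgebra
  Matrix.linftyOpNormedAddCommGroup Matrix.linftyOpNormedSpace

theorem HasDerivAt.dotProduct_mulVec {m n 𝕜 : Type*} [Fintype m] [Fintype n] [RCLike 𝕜]
    {Q : ℝ → Matrix m n 𝕜} {Q' : Matrix m n 𝕜} {t : ℝ} (hQ : HasDerivAt Q Q' t)
    (a : m → 𝕜) (b : n → 𝕜) :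
    HasDerivAt (fun s => a ⬝ᵥ (Q s *ᵥ b)) (a ⬝ᵥ (Q' *ᵥ b)) t := by
  let L : Matrix m n 𝕜 →ₗ[ℝ] 𝕜 :=
    { toFun := fun Q => a ⬝ᵥ (Q *ᵥ b)
      map_add' := fun Q R => by simp only [add_mulVec, dotProduct_add]
      map_smul' := fun r Q => by
        simp only [smul_mulVec, dotProduct_smul, RingHom.id_apply] }
  exact L.toContinuousLinearMap.hasFDerivAt.comp_hasDerivAt t hQ

variable {M N : ℕ} (A : Matrix (Fin M) (Fin N) ℂ) (σ : ℝ) (y : Fin M → ℂ)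

noncomputable def precision (v : Fin N → ℝ) : Matrix (Fin N) (Fin N) ℂ :=
  ((σ : ℂ) ^ 2)⁻¹ • (Aᴴ * A) + (Dmat v)⁻¹

theorem Phi_eq_inv_precision (v : Fin N → ℝ) : Phi A σ v = (precision A σ v)⁻¹ := rfl

theorem inv_Dmat {v : Fin N → ℝ} (hv : ∀ j, v j ≠ 0) :
    (Dmat v)⁻¹ = diagonal fun j => ((v j : ℂ))⁻¹ :=
  inv_eq_right_inv <| by
    rw [Dmat, diagonal_mul_diagonal, ← diagonal_one]
    exact congrArg diagonal <| funext fun j => mul_inv_cancel₀ (Complex.ofReal_ne_zero.2 (hv j))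

theorem precision_update {v : Fin N → ℝ} (hv : ∀ j, v j ≠ 0) (i : Fin N) {s : ℝ} (hs : s ≠ 0) :
    precision A σ (Function.update v i s)
      = precision A σ v + ((s : ℂ)⁻¹ - (v i : ℂ)⁻¹) • single i i 1 := by
  have hv' : ∀ j, Function.update v i s j ≠ 0 :=
    (Function.forall_update_iff v fun _ w => w ≠ 0).2 ⟨hs, fun j _ => hv j⟩
  rw [precision, precision, inv_Dmat hv, inv_Dmat hv', add_assoc]
  congr 1
  ext j k
  rcases eq_or_ne j k with rfl | hjk
  · rcases eq_or_ne j i with rfl | hji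
    · simp
    · simp [hji, Ne.symm hji]
  · have hoff : ¬(i = j ∧ i = k) := fun h => hjk (h.1.symm.trans h.2)
    simp [hjk, single_apply_of_ne (h := hoff)]

open ComplexOrder

theorem posDef_precision {v : Fin N → ℝ} (hv : ∀ j, 0 < v j) : (precision A σ v).PosDef := by
  have hAA : (((σ : ℂ) ^ 2)⁻¹ • (Aᴴ * A)).PosSemidef := by
    refine (posSemidef_conjTranspose_mul_self A).smul ?_
    rw [← Complex.ofReal_pow, ← Complex.ofReal_inv]
    exact Complex.zero_le_real.2 (by positivity)
  rw [precision, inv_Dmat fun j => (hv j).ne']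
  exact PosDef.posSemidef_add hAA (PosDef.diagonal fun j => by
    rw [← Complex.ofReal_inv]; exact Complex.zero_lt_real.2 (inv_pos.2 (hv j)))

theorem isHermitian_Phi {v : Fin N → ℝ} (hv : ∀ j, 0 < v j) : (Phi A σ v).IsHermitian :=
  (posDef_precision A σ hv).isHermitian.inv

theorem isUnit_det_Phi {v : Fin N → ℝ} (hv : ∀ j, 0 < v j) : IsUnit (Phi A σ v).det :=
  isUnit_nonsing_inv_det _ ((isUnit_iff_isUnit_det _).1 (posDef_precision A σ hv).isUnit)

theorem star_mvec_dotProduct_inv_Phi_mulVec_mvec {v : Fin N → ℝ} (hv : ∀ j, 0 < v j) :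
    star (mvec A σ y v) ⬝ᵥ ((Phi A σ v)⁻¹ *ᵥ mvec A σ y v)
      = ((σ : ℂ) ^ 4)⁻¹ * (star y ⬝ᵥ (A *ᵥ (Phi A σ v *ᵥ (Aᴴ *ᵥ y)))) := by
  have hreal : star ((σ : ℂ) ^ 2)⁻¹ = ((σ : ℂ) ^ 2)⁻¹ := by
    rw [star_inv₀, star_pow, Complex.star_def, Complex.conj_ofReal]
  rw [mvec, (isHermitian_Phi A σ hv).star_smul_mulVec_dotProduct_inv_mulVec (isUnit_det_Phi A σ hv)
    hreal, star_conjTranspose_mulVec_dotProduct]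
  ring

theorem hasDerivAt_Phi_update {v : Fin N → ℝ} (hv : ∀ j, 0 < v j) (i : Fin N) :
    HasDerivAt (fun t => Phi A σ (Function.update v i t))
      (Phi A σ v * single i i ((v i : ℂ) ^ 2)⁻¹ * Phi A σ v) (v i) := by
  have hv₀ : ∀ j, v j ≠ 0 := fun j => (hv j).ne'
  set P := precision A σ v
  have hcurve : HasDerivAt (fun t : ℝ => P + ((t : ℂ)⁻¹ - (v i : ℂ)⁻¹) • single i i (1 : ℂ))
      (-((v i : ℂ) ^ 2)⁻¹ • single i i 1) (v i) :=
    (((hasDerivAt_inv (Complex.ofReal_ne_zero.2 (hv₀ i))).comp_ofReal.sub_const _).smul_const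
      _).const_add _
  have hunit : IsUnit (P + ((v i : ℂ)⁻¹ - (v i : ℂ)⁻¹) • single i i (1 : ℂ)) := by
    simpa using (posDef_precision A σ hv).isUnit
  have hinv := hcurve.ringInverse hunit
  simp only [sub_self, zero_smul, add_zero] at hinv
  refine (hinv.congr_deriv ?_).congr_of_eventuallyEq ?_
  · rw [← nonsing_inv_eq_ringInverse, ← Phi_eq_inv_precision]
    simp [smul_single]
  · filter_upwards [eventually_ne_nhds (hv₀ i)] with t ht
    rw [Phi_eq_inv_precision, precision_update A σ hv₀ i ht, nonsing_inv_eq_ringInverse]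

theorem hasDerivAt_re_star_mvec_dotProduct_inv_Phi_mulVec_mvec_update {v : Fin N → ℝ}
    (hv : ∀ j, 0 < v j) (i : Fin N) :
    HasDerivAt
      (fun t : ℝ =>
        (star (mvec A σ y (Function.update v i t)) ⬝ᵥ
          ((Phi A σ (Function.update v i t))⁻¹ *ᵥ mvec A σ y (Function.update v i t))).re)
      ((((σ : ℂ) ^ 4)⁻¹ * (star y ⬝ᵥ (A *ᵥ
          ((Phi A σ v * single i i (((v i : ℂ)) ^ 2)⁻¹ * Phi A σ v) *ᵥ (Aᴴ *ᵥ y))))).re) (v i) := by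
  have hform := ((hasDerivAt_Phi_update A σ hv i).dotProduct_mulVec (star y ᵥ* A)
    (Aᴴ *ᵥ y)).const_mul (((σ : ℂ) ^ 4)⁻¹)
  rw [← dotProduct_mulVec] at hform
  refine (Complex.reCLM.hasFDerivAt.comp_hasDerivAt (v i) hform).congr_of_eventuallyEq ?_
  filter_upwards [lt_mem_nhds (hv i)] with t ht
  have hpos : ∀ j, 0 < Function.update v i t j :=
    (Function.forall_update_iff v fun _ w => 0 < w).2 ⟨ht, fun j _ => hv j⟩
  simp [star_mvec_dotProduct_inv_Phi_mulVec_mvec A σ y hpos, dotProduct_mulVec]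

theorem re_Phi_single_Phi_form_eq_normSq {v : Fin N → ℝ} (hv : ∀ j, 0 < v j) (i : Fin N) :
    (((σ : ℂ) ^ 4)⁻¹ * (star y ⬝ᵥ (A *ᵥ
        ((Phi A σ v * single i i (((v i : ℂ)) ^ 2)⁻¹ * Phi A σ v) *ᵥ (Aᴴ *ᵥ y))))).re
      = (σ ^ 4)⁻¹ * ((v i) ^ 2)⁻¹ *
          Complex.normSq (star y ⬝ᵥ (A *ᵥ fun j => Phi A σ v j i)) := by
  have hP := isHermitian_Phi A σ hv
  set z := (Phi A σ v *ᵥ (Aᴴ *ᵥ y)) i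
  have hcol : star y ⬝ᵥ (A *ᵥ fun j => Phi A σ v j i) = star z := by
    rw [← hP.star_dotProduct_mulVec_single, star_conjTranspose_mulVec_dotProduct,
      mulVec_single_one]
    rfl
  rw [← star_conjTranspose_mulVec_dotProduct, hP.star_dotProduct_mul_single_mul_mulVec, hcol,
    Complex.star_def, Complex.normSq_conj, mul_right_comm, ← Complex.normSq_eq_conj_mul_self]
  norm_cast
  ring

end

theorem stmt13_general (M N : ℕ) (A : Matrix (Fin M) (Fin N) ℂ)
    (y : Fin M → ℂ) (σ : ℝ) (v : Fin N → ℝ) (hv : ∀ i, 0 < v i) (i : Fin N) :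
    (∀ v' : Fin N → ℝ, (∀ j, 0 < v' j) →
        star (mvec A σ y v') ⬝ᵥ ((Phi A σ v')⁻¹ *ᵥ mvec A σ y v')
          = ((σ : ℂ) ^ 4)⁻¹ * (star y ⬝ᵥ (A *ᵥ (Phi A σ v' *ᵥ (Aᴴ *ᵥ y))))) ∧
      HasDerivAt
        (fun t : ℝ =>
          (star (mvec A σ y (Function.update v i t)) ⬝ᵥ
            ((Phi A σ (Function.update v i t))⁻¹ *ᵥ mvec A σ y (Function.update v i t))).re)
        ((((σ : ℂ) ^ 4)⁻¹ * (star y ⬝ᵥ (A *ᵥ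
            ((Phi A σ v * Matrix.single i i (((v i : ℂ)) ^ 2)⁻¹ * Phi A σ v) *ᵥ
              (Aᴴ *ᵥ y))))).re) (v i) ∧
      (((σ : ℂ) ^ 4)⁻¹ * (star y ⬝ᵥ (A *ᵥ
          ((Phi A σ v * Matrix.single i i (((v i : ℂ)) ^ 2)⁻¹ * Phi A σ v) *ᵥ
            (Aᴴ *ᵥ y))))).re
        = (σ ^ 4)⁻¹ * ((v i) ^ 2)⁻¹ *
            Complex.normSq (star y ⬝ᵥ (A *ᵥ fun j => Phi A σ v j i)) :=
  ⟨fun _ hv' => star_mvec_dotProduct_inv_Phi_mulVec_mvec A σ y hv',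
    hasDerivAt_re_star_mvec_dotProduct_inv_Phi_mulVec_mvec_update A σ y hv i,
    re_Phi_single_Phi_form_eq_normSq A σ y hv i⟩

/-- the real-valued map t ↦ m(v^{(i,t)})ᴴ Φ(v^{(i,t)})⁻¹ m(v^{(i,t)})
satisfies m(v)ᴴΦ(v)⁻¹m(v) = σ⁻⁴ yᴴ A Φ(v) Aᴴ y for all v (with positive entries), and is
differentiable at t = vᵢ with derivative σ⁻⁴ yᴴ A Φ(v) E_i(v) Φ(v) Aᴴ y
  = σ⁻⁴ vᵢ⁻² |yᴴ A uᵢ|², where uᵢ is the i-th column of Φ(v). -/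
theorem stmt13 (M N : ℕ) (hM : 0 < M) (hN : 0 < N) (A : Matrix (Fin M) (Fin N) ℂ)
    (y : Fin M → ℂ) (σ : ℝ) (hσ : 0 < σ) (v : Fin N → ℝ) (hv : ∀ i, 0 < v i) (i : Fin N) :
    (∀ v' : Fin N → ℝ, (∀ j, 0 < v' j) →
        star (mvec A σ y v') ⬝ᵥ ((Phi A σ v')⁻¹ *ᵥ mvec A σ y v')
          = ((σ : ℂ) ^ 4)⁻¹ * (star y ⬝ᵥ (A *ᵥ (Phi A σ v' *ᵥ (Aᴴ *ᵥ y))))) ∧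
      HasDerivAt
        (fun t : ℝ =>
          (star (mvec A σ y (Function.update v i t)) ⬝ᵥ
            ((Phi A σ (Function.update v i t))⁻¹ *ᵥ mvec A σ y (Function.update v i t))).re)
        ((((σ : ℂ) ^ 4)⁻¹ * (star y ⬝ᵥ (A *ᵥ
            ((Phi A σ v * Matrix.single i i (((v i : ℂ)) ^ 2)⁻¹ * Phi A σ v) *ᵥ
              (Aᴴ *ᵥ y))))).re) (v i) ∧
      (((σ : ℂ) ^ 4)⁻¹ * (star y ⬝ᵥ (A *ᵥ
          ((Phi A σ v * Matrix.single i i (((v i : ℂ)) ^ 2)⁻¹ * Phi A σ v) *ᵥ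
            (Aᴴ *ᵥ y))))).re
        = (σ ^ 4)⁻¹ * ((v i) ^ 2)⁻¹ *
            Complex.normSq (star y ⬝ᵥ (A *ᵥ fun j => Phi A σ v j i)) :=
  stmt13_general M N A y σ v hv i
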